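/- arXiv:1201.3498 — 2 statements merged into one kernel-verified Lean document; each statement's English description precedes it below -/
import Mathlib

section
/- In a priced game where Player 2 has no improving switches with respect to strategy profile σ, if Player 1 switches to a best response σ₁' against σ₂, then u(k, σ₁', σ₂) = u(k, σ) for all states k. Equivalently (as in the proof of Lemma 2 of the paper): if σ₁' is a best response to σ₂ and there existed a state k₀ with u(k₀, σ₁', σ₂) < u(k₀, σ), then along the path induced by (σ₁', σ₂) from k₀ there would be a Player-1 improving switch with respect to σ, a contradiction. -/
noncomputable section

open Classical
open scoped ENNReal

namespace PTGpaper

/-- A priced game: finitely many states partitioned between Player 1 (owner `0`,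
the minimizer) and Player 2 (owner `1`, the maximizer), actions with nonnegative
(extended real) costs and destinations in the states or the terminal state
(modeled by `none`). -/
structure PricedGame where
  n : ℕ
  owner : Fin n → Fin 2
  A : Fin n → Finset ℕ
  cost : ℕ → ℝ≥0∞
  dest : ℕ → Option (Fin n)

namespace PricedGame

variable (G : PricedGame)

/-- A positional strategy profile: a choice of an available action in each state. -/
def Valid (σ : Fin G.n → ℕ) : Prop :=
  ∀ k, σ k ∈ G.A k

def step (σ : Fin G.n → ℕ) (o : Option (Fin G.n)) : Option (Fin G.n) :=
  o.bind fun k => G.dest (σ k)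

/-- The state reached after `t` steps of the path `P_{k,σ}` (`none` = terminal). -/
def reach (σ : Fin G.n → ℕ) (k : Fin G.n) (t : ℕ) : Option (Fin G.n) :=
  (G.step σ)^[t] (some k)

/-- The path from `k` under `σ` reaches the terminal state `⊥`. -/
def Terminates (σ : Fin G.n → ℕ) (k : Fin G.n) : Prop :=
  ∃ t, G.reach σ k t = none

/-- Payoff `u(k,σ)`: total cost of the path from `k` to `⊥`, or `∞` if `⊥` is unreached. -/
def payoff (σ : Fin G.n → ℕ) (k : Fin G.n) : ℝ≥0∞ :=
  if G.Terminates σ k then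
    ∑' t : ℕ, (G.reach σ k t).elim 0 (fun k' => G.cost (σ k'))
  else ⊤

/-- Length `ℓ(k,σ)` of the path from `k` to `⊥` (`⊤` if `⊥` is unreached). -/
def len (σ : Fin G.n → ℕ) (k : Fin G.n) : ℕ∞ :=
  ⨅ (t : ℕ) (_ : G.reach σ k t = none), (t : ℕ∞)

def payoffO (σ : Fin G.n → ℕ) (o : Option (Fin G.n)) : ℝ≥0∞ :=
  o.elim 0 (G.payoff σ)

def lenO (σ : Fin G.n → ℕ) (o : Option (Fin G.n)) : ℕ∞ :=
  o.elim 0 (G.len σ)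

/-- The valuation `ν(k,σ) = (u(k,σ), ℓ(k,σ))`, ordered lexicographically. -/
def valn (σ : Fin G.n → ℕ) (k : Fin G.n) : ℝ≥0∞ ×ₗ ℕ∞ :=
  toLex (G.payoff σ k, G.len σ k)

/-- The valuation obtained by first using action `j` and then following `σ`. -/
def cand (σ : Fin G.n → ℕ) (j : ℕ) : ℝ≥0∞ ×ₗ ℕ∞ :=
  toLex (G.cost j + G.payoffO σ (G.dest j), 1 + G.lenO σ (G.dest j))

/-- `j ∈ A k` is an improving switch for Player 1 (the minimizer) at `k` w.r.t. `σ`. -/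
def Improving1 (σ : Fin G.n → ℕ) (k : Fin G.n) (j : ℕ) : Prop :=
  j ∈ G.A k ∧ G.cand σ j < G.valn σ k

/-- `j ∈ A k` is an improving switch for Player 2 (the maximizer) at `k` w.r.t. `σ`. -/
def Improving2 (σ : Fin G.n → ℕ) (k : Fin G.n) (j : ℕ) : Prop :=
  j ∈ G.A k ∧ G.valn σ k < G.cand σ j

/-- Strongly improving switch for Player 1: strictly smaller payoff. -/
def StronglyImproving1 (σ : Fin G.n → ℕ) (k : Fin G.n) (j : ℕ) : Prop :=
  j ∈ G.A k ∧ G.cost j + G.payoffO σ (G.dest j) < G.payoff σ k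

/-- Strongly improving switch for Player 2: strictly larger payoff. -/
def StronglyImproving2 (σ : Fin G.n → ℕ) (k : Fin G.n) (j : ℕ) : Prop :=
  j ∈ G.A k ∧ G.payoff σ k < G.cost j + G.payoffO σ (G.dest j)

/-- Combine a Player 1 strategy and a Player 2 strategy into a profile. -/
def combine (σ₁ σ₂ : Fin G.n → ℕ) (k : Fin G.n) : ℕ :=
  if G.owner k = 0 then σ₁ k else σ₂ k

/-- The upper value `min_{σ₁} max_{σ₂} u(k,σ₁,σ₂)`. -/
def upperVal (k : Fin G.n) : ℝ≥0∞ :=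
  ⨅ σ₁ : {σ : Fin G.n → ℕ // G.Valid σ}, ⨆ σ₂ : {σ : Fin G.n → ℕ // G.Valid σ},
    G.payoff (G.combine σ₁ σ₂) k

/-- The lower value `max_{σ₂} min_{σ₁} u(k,σ₁,σ₂)`. -/
def lowerVal (k : Fin G.n) : ℝ≥0∞ :=
  ⨆ σ₂ : {σ : Fin G.n → ℕ // G.Valid σ}, ⨅ σ₁ : {σ : Fin G.n → ℕ // G.Valid σ},
    G.payoff (G.combine σ₁ σ₂) k

/-- `σ₁` is a best response of Player 1 to `σ₂`: it minimizes the payoff at every state. -/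
def BestResponse1 (σ₁ σ₂ : Fin G.n → ℕ) : Prop :=
  G.Valid σ₁ ∧ ∀ σ₁' : Fin G.n → ℕ, G.Valid σ₁' →
    ∀ k, G.payoff (G.combine σ₁ σ₂) k ≤ G.payoff (G.combine σ₁' σ₂) k

/-- `σ₂` is a best response of Player 2 to `σ₁`: it maximizes the payoff at every state. -/
def BestResponse2 (σ₁ σ₂ : Fin G.n → ℕ) : Prop :=
  G.Valid σ₂ ∧ ∀ σ₂' : Fin G.n → ℕ, G.Valid σ₂' →
    ∀ k, G.payoff (G.combine σ₁ σ₂') k ≤ G.payoff (G.combine σ₁ σ₂) k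

/-- `σ₁` is an optimal Player 1 strategy: it attains the upper value at every state. -/
def Optimal1 (σ₁ : Fin G.n → ℕ) : Prop :=
  G.Valid σ₁ ∧ ∀ k,
    (⨆ σ₂ : {σ : Fin G.n → ℕ // G.Valid σ}, G.payoff (G.combine σ₁ σ₂) k) = G.upperVal k

/-- `σ₂` is an optimal Player 2 strategy: it attains the lower value at every state. -/
def Optimal2 (σ₂ : Fin G.n → ℕ) : Prop :=
  G.Valid σ₂ ∧ ∀ k,
    (⨅ σ₁ : {σ : Fin G.n → ℕ // G.Valid σ}, G.payoff (G.combine σ₁ σ₂) k) = G.lowerVal k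

/-- `σ[B]`: switch `σ` to the actions prescribed by the partial assignment `β`
(at most one action per state). -/
def switch (σ : Fin G.n → ℕ) (β : Fin G.n → Option ℕ) (k : Fin G.n) : ℕ :=
  (β k).getD (σ k)

/-- `β` represents an improving set `B` for Player 1: it contains at least one
improving switch for Player 1 and no improving switch for Player 2. -/
def ImprovingSet1 (σ : Fin G.n → ℕ) (β : Fin G.n → Option ℕ) : Prop :=
  (∀ k j, β k = some j → j ∈ G.A k) ∧
  (∃ k j, β k = some j ∧ G.Improving1 σ k j) ∧
  (∀ k j, β k = some j → ¬ G.Improving2 σ k j)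

/-- `β` represents an improving set `B` for Player 2. -/
def ImprovingSet2 (σ : Fin G.n → ℕ) (β : Fin G.n → Option ℕ) : Prop :=
  (∀ k j, β k = some j → j ∈ G.A k) ∧
  (∃ k j, β k = some j ∧ G.Improving2 σ k j) ∧
  (∀ k j, β k = some j → ¬ G.Improving1 σ k j)

end PricedGame

end PTGpaper

/-!
Player 2 plays `σ₂` in both `σ = (σ₁, σ₂)` and `τ = (σ₁', σ₂)`, and at Player-1 states the
absence of improving switches says that `u(·, σ)` does not decrease when the action of `τ` is
taken and `σ` is followed afterwards. So `u(·, σ)` is a sub-solution of the Bellman equation of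
`τ`, and unrolling that equation along the path of `τ` until it reaches `⊥` gives
`u(·, σ) ≤ u(·, τ)`. The reverse inequality holds because `σ₁'` is a best response.
-/

namespace PTGpaper

namespace PricedGame

variable (G : PricedGame)

theorem reach_succ (σ : Fin G.n → ℕ) (k : Fin G.n) (t : ℕ) :
    G.reach σ k (t + 1) = (G.dest (σ k)).elim none (fun k' => G.reach σ k' t) := by
  simp only [reach, Function.iterate_succ_apply, step, Option.bind_some]
  cases G.dest (σ k) with
  | none => exact Function.iterate_fixed (f := G.step σ) (x := none) rfl t
  | some k' => rfl

theorem terminates_iff_of_dest_eq_some {σ : Fin G.n → ℕ} {k k' : Fin G.n}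
    (h : G.dest (σ k) = some k') : G.Terminates σ k ↔ G.Terminates σ k' := by
  constructor
  · rintro ⟨_ | t, ht⟩
    · exact absurd ht (Option.some_ne_none k)
    · exact ⟨t, by rwa [reach_succ, h] at ht⟩
  · rintro ⟨t, ht⟩
    exact ⟨t + 1, by rwa [reach_succ, h]⟩

theorem payoff_eq_cost_add_payoffO (σ : Fin G.n → ℕ) (k : Fin G.n) :
    G.payoff σ k = G.cost (σ k) + G.payoffO σ (G.dest (σ k)) := by
  have tsum_split : (∑' t, (G.reach σ k t).elim 0 fun k' => G.cost (σ k')) =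
      G.cost (σ k) + ∑' t, (G.reach σ k (t + 1)).elim 0 fun k' => G.cost (σ k') :=
    tsum_eq_zero_add' ENNReal.summable
  cases h : G.dest (σ k) with
  | none =>
    have hterm : G.Terminates σ k := ⟨1, by rw [reach_succ, h]; rfl⟩
    simp only [payoff, if_pos hterm, tsum_split, reach_succ, h, Option.elim_none, tsum_zero,
      payoffO]
  | some k' =>
    by_cases hterm : G.Terminates σ k'
    · simp only [payoff, if_pos hterm, if_pos ((G.terminates_iff_of_dest_eq_some h).mpr hterm),
        tsum_split, reach_succ, h, Option.elim_some, payoffO]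
    · simp only [payoff, if_neg hterm, if_neg (mt (G.terminates_iff_of_dest_eq_some h).mp hterm),
        payoffO, Option.elim_some, add_top]

theorem payoff_le_payoff_of_forall_le_cost_add {σ τ : Fin G.n → ℕ}
    (h : ∀ k, G.payoff σ k ≤ G.cost (τ k) + G.payoffO σ (G.dest (τ k))) (k : Fin G.n) :
    G.payoff σ k ≤ G.payoff τ k := by
  by_cases hterm : G.Terminates τ k
  · obtain ⟨t, ht⟩ := hterm
    induction t generalizing k with
    | zero => exact absurd ht (Option.some_ne_none k)
    | succ t ih =>
      rw [payoff_eq_cost_add_payoffO G τ k]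
      refine (h k).trans (add_le_add le_rfl ?_)
      cases hd : G.dest (τ k) with
      | none => exact le_rfl
      | some k' => exact ih k' (by rwa [reach_succ, hd] at ht)
  · simp only [payoff, if_neg hterm, le_top]

theorem payoff_le_cost_add_of_not_improving1 {σ : Fin G.n → ℕ} {k : Fin G.n} {j : ℕ}
    (hj : j ∈ G.A k) (hni : ¬ G.Improving1 σ k j) :
    G.payoff σ k ≤ G.cost j + G.payoffO σ (G.dest j) :=
  Prod.Lex.monotone_fst _ _ (not_lt.mp fun hlt => hni ⟨hj, hlt⟩)

end PricedGame

open PricedGame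

theorem best_response_payoff_eq_general (G : PricedGame) (σ₁ σ₂ σ₁' : Fin G.n → ℕ)
    (hσ₁ : G.Valid σ₁)
    (h1 : ∀ k j, G.owner k = 0 → ¬ G.Improving1 (G.combine σ₁ σ₂) k j)
    (hbr : G.BestResponse1 σ₁' σ₂) :
    ∀ k, G.payoff (G.combine σ₁' σ₂) k = G.payoff (G.combine σ₁ σ₂) k := by
  intro k
  refine le_antisymm (hbr.2 σ₁ hσ₁ k) (G.payoff_le_payoff_of_forall_le_cost_add (fun k => ?_) k)
  by_cases ho : G.owner k = 0
  · have hA : G.combine σ₁' σ₂ k ∈ G.A k := by simpa only [combine, ho, if_true] using hbr.1 k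
    exact G.payoff_le_cost_add_of_not_improving1 hA (h1 k _ ho)
  · have hτσ : G.combine σ₁' σ₂ k = G.combine σ₁ σ₂ k := by simp only [combine, ho, if_false]
    rw [hτσ, ← payoff_eq_cost_add_payoffO]

/-- if Player 1 has no improving switches with respect to `σ = (σ₁,σ₂)`
(so that, as in the proof of Lemma 2, a state `k₀` with `u(k₀,σ₁',σ₂) < u(k₀,σ)` would
give a Player-1 improving switch along the induced path, a contradiction), then any
best response `σ₁'` to `σ₂` yields the same payoff as `σ` at every state. -/
theorem best_response_payoff_eq (G : PricedGame) (σ₁ σ₂ σ₁' : Fin G.n → ℕ)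
    (hσ₁ : G.Valid σ₁) (hσ₂ : G.Valid σ₂)
    (h1 : ∀ k j, G.owner k = 0 → ¬ G.Improving1 (G.combine σ₁ σ₂) k j)
    (hbr : G.BestResponse1 σ₁' σ₂) :
    ∀ k, G.payoff (G.combine σ₁' σ₂) k = G.payoff (G.combine σ₁ σ₂) k :=
  best_response_payoff_eq_general G σ₁ σ₂ σ₁' hσ₁ h1 hbr

end PTGpaper
end
end

section
/- In a priced game, let σ be a strategy profile that is optimal, and let j ∈ Aₖ be an improving switch for Player i with respect to σ in the associated infinitesimal game (i.e., j changes the valuation without changing the payoff). Then the potential matrix strictly decreases: P(σ[j]) ≺ P(σ), where ≺ is the lexicographic order on potential matrices in which lower rates are more significant and, within a rate, shorter path lengths are more significant. -/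
noncomputable section

open Classical
open scoped ENNReal

namespace PTGpaper

namespace PricedGame

variable (G : PricedGame)

/-- The number of steps the path from `k` under `σ` takes to reach `⊥`
(i.e. `ℓ(k,σ)`, as a natural number; `0` if `⊥` is unreached). -/
def pathLen (σ : Fin G.n → ℕ) (k : Fin G.n) : ℕ :=
  sInf {t | G.reach σ k t = none}

/-- `r(k,σ)`: the rate of the state at which the path from `k` under `σ` waits,
i.e. the rate of the second-to-last state if the last action used is the designated
waiting action of that state, and `0` otherwise. -/
def waitRate (rate : Fin G.n → ℝ≥0∞) (wait : Fin G.n → ℕ)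
    (σ : Fin G.n → ℕ) (k : Fin G.n) : ℝ≥0∞ :=
  if G.Terminates σ k then
    (G.reach σ k (G.pathLen σ k - 1)).elim 0
      (fun k' => if σ k' = wait k' then rate k' else 0)
  else 0

/-- `count(σ,i,ℓ,ρ)`: the number of states of player `i` at distance `ℓ` from `⊥`
in `σ` that reach a waiting state of rate `ρ`. -/
def countPot (rate : Fin G.n → ℝ≥0∞) (wait : Fin G.n → ℕ)
    (σ : Fin G.n → ℕ) (i : Fin 2) (ℓ : ℕ) (ρ : ℝ≥0∞) : ℕ :=
  Nat.card {k : Fin G.n // G.owner k = i ∧ G.Terminates σ k ∧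
    G.pathLen σ k = ℓ ∧ G.waitRate rate wait σ k = ρ}

/-- The potential matrix `P(σ)`, indexed by path lengths and rates. -/
def potential (rate : Fin G.n → ℝ≥0∞) (wait : Fin G.n → ℕ)
    (σ : Fin G.n → ℕ) : ℕ → ℝ≥0∞ → ℤ :=
  fun ℓ ρ => (G.countPot rate wait σ 1 ℓ ρ : ℤ) - (G.countPot rate wait σ 0 ℓ ρ : ℤ)

end PricedGame

/-- The lexicographic order `≺` on potential matrices: entries of lower rates are more
significant, and within a rate, entries of shorter lengths are more significant. -/
def PrecPot (P Q : ℕ → ℝ≥0∞ → ℤ) : Prop :=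
  ∃ (ℓ : ℕ) (ρ : ℝ≥0∞),
    (∀ ρ' < ρ, ∀ ℓ', P ℓ' ρ' = Q ℓ' ρ') ∧
    (∀ ℓ' < ℓ, P ℓ' ρ = Q ℓ' ρ) ∧
    P ℓ ρ < Q ℓ ρ

end PTGpaper

/-!
Switching `k` to `j` only changes the paths that run through `k`. A state `x ≠ k` that first
reaches `k` after `d ≥ 1` steps has rate `r(k)` and length `d + ℓ(k)`, before and after the
switch, hence lies strictly below the more significant of the two entries of `k`; every other
state keeps its entry. So `P(σ)` and `P(σ[j])` agree on all entries more significant than the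
better entry of `k`, and at that entry they differ only by `k` itself. If `k` belongs to Player 1
the better entry is its entry in `σ[j]`, which `k` joins; if it belongs to Player 2 it is its
entry in `σ`, which `k` leaves. As `P` counts Player 2 positively and Player 1 negatively, that
entry drops by one either way.
-/

namespace PTGpaper

namespace PricedGame

section Paths

variable {G : PricedGame} {σ τ : Fin G.n → ℕ} {x y k : Fin G.n}

lemma reach_zero : G.reach σ x 0 = some x := rfl

lemma reach_succ_s7 (t : ℕ) : G.reach σ x (t + 1) = G.step σ (G.reach σ x t) :=
  Function.iterate_succ_apply' _ _ _

lemma reach_add {d : ℕ} (hd : G.reach σ x d = some y) (s : ℕ) :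
    G.reach σ x (d + s) = G.reach σ y s := by
  rw [reach, add_comm, Function.iterate_add_apply]
  exact congrArg _ hd

lemma reach_eq_none_of_le {t t' : ℕ} (h : t ≤ t') (ht : G.reach σ x t = none) :
    G.reach σ x t' = none := by
  induction t', h using Nat.le_induction with
  | base => exact ht
  | succ t' _ ih => rw [reach_succ_s7, ih]; rfl

lemma reach_pathLen (h : G.Terminates σ x) : G.reach σ x (G.pathLen σ x) = none :=
  Nat.sInf_mem h

lemma pathLen_le {t : ℕ} (ht : G.reach σ x t = none) : G.pathLen σ x ≤ t :=
  Nat.sInf_le ht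

lemma pathLen_pos (h : G.Terminates σ x) : 0 < G.pathLen σ x := by
  refine Nat.pos_of_ne_zero fun h0 => ?_
  simpa [h0, reach_zero] using reach_pathLen h

lemma terminates_of_reach_eq_some {d : ℕ} (hd : G.reach σ x d = some y)
    (hy : G.Terminates σ y) : G.Terminates σ x :=
  ⟨d + G.pathLen σ y, by rw [reach_add hd, reach_pathLen hy]⟩

lemma pathLen_of_reach_eq_some {d : ℕ} (hd : G.reach σ x d = some y)
    (hy : G.Terminates σ y) : G.pathLen σ x = d + G.pathLen σ y := by
  refine le_antisymm (pathLen_le (by rw [reach_add hd, reach_pathLen hy])) ?_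
  refine le_csInf (terminates_of_reach_eq_some hd hy) fun t (ht : G.reach σ x t = none) => ?_
  obtain ⟨s, rfl⟩ : ∃ s, t = d + s := by
    refine Nat.exists_eq_add_of_le (not_lt.mp fun hlt => ?_)
    simpa [hd] using reach_eq_none_of_le hlt.le ht
  rw [reach_add hd] at ht
  exact Nat.add_le_add_left (pathLen_le ht) d

lemma waitRate_of_reach_eq_some (rate : Fin G.n → ℝ≥0∞) (wait : Fin G.n → ℕ) {d : ℕ}
    (hd : G.reach σ x d = some y) (hy : G.Terminates σ y) :
    G.waitRate rate wait σ x = G.waitRate rate wait σ y := by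
  have hlast : G.reach σ x (G.pathLen σ x - 1) = G.reach σ y (G.pathLen σ y - 1) := by
    rw [pathLen_of_reach_eq_some hd hy, Nat.add_sub_assoc (pathLen_pos hy), reach_add hd]
  rw [waitRate, waitRate, if_pos (terminates_of_reach_eq_some hd hy), if_pos hy, hlast]

lemma reach_update_of_forall_lt_ne (j : ℕ) {t : ℕ} (h : ∀ s < t, G.reach σ x s ≠ some k) :
    G.reach (Function.update σ k j) x t = G.reach σ x t := by
  induction t with
  | zero => rfl
  | succ t ih =>
    rw [reach_succ_s7, reach_succ_s7, ih fun s hs => h s (hs.trans t.lt_succ_self)]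
    cases hc : G.reach σ x t with
    | none => rfl
    | some m =>
      have hm : m ≠ k := fun hmk => h t t.lt_succ_self (hc.trans (congrArg some hmk))
      simp only [step, Option.bind_some, Function.update_of_ne hm]

end Paths

section Cells

variable {G : PricedGame} (rate : Fin G.n → ℝ≥0∞) (wait : Fin G.n → ℕ)

/-- The entry of `P(τ)` that counts `x`; the lexicographic order on keys is the significance
order of `≺`. -/
def key (τ : Fin G.n → ℕ) (x : Fin G.n) : ℝ≥0∞ ×ₗ ℕ :=
  toLex (G.waitRate rate wait τ x, G.pathLen τ x)

def InCell (τ : Fin G.n → ℕ) (ℓ : ℕ) (ρ : ℝ≥0∞) (x : Fin G.n) : Prop :=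
  G.Terminates τ x ∧ G.key rate wait τ x = toLex (ρ, ℓ)

variable {rate wait} {σ τ : Fin G.n → ℕ} {x y k : Fin G.n}

lemma key_of_reach_eq_some {d : ℕ} (hd : G.reach τ x d = some y) (hy : G.Terminates τ y) :
    G.key rate wait τ x = toLex (G.waitRate rate wait τ y, d + G.pathLen τ y) := by
  rw [key, waitRate_of_reach_eq_some rate wait hd hy, pathLen_of_reach_eq_some hd hy]

lemma key_lt_key_of_reach_eq_some {d : ℕ} (hd : G.reach τ x d = some y) (hpos : 0 < d)
    (hy : G.Terminates τ y) : G.key rate wait τ y < G.key rate wait τ x := by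
  rw [key_of_reach_eq_some hd hy, key, Prod.Lex.toLex_lt_toLex]
  exact Or.inr ⟨rfl, Nat.lt_add_of_pos_left hpos⟩

lemma inCell_update_iff_of_forall_reach_ne (j : ℕ) {ℓ : ℕ} {ρ : ℝ≥0∞}
    (h : ∀ t, G.reach σ x t ≠ some k) :
    G.InCell rate wait (Function.update σ k j) ℓ ρ x ↔ G.InCell rate wait σ ℓ ρ x := by
  have hreach : G.reach (Function.update σ k j) x = G.reach σ x :=
    funext fun t => reach_update_of_forall_lt_ne j fun s _ => h s
  have hlast : ∀ m, G.reach σ x (G.pathLen σ x - 1) = some m → Function.update σ k j m = σ m :=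
    fun m hm => Function.update_of_ne (fun hmk => h _ (hm.trans (congrArg some hmk))) j σ
  have hterm : G.Terminates (Function.update σ k j) x ↔ G.Terminates σ x := by
    rw [Terminates, Terminates, hreach]
  have hlen : G.pathLen (Function.update σ k j) x = G.pathLen σ x := by
    rw [pathLen, pathLen, hreach]
  have hrate : G.waitRate rate wait (Function.update σ k j) x = G.waitRate rate wait σ x := by
    rw [waitRate, waitRate, hlen, hreach]
    refine if_congr hterm ?_ rfl
    cases hc : G.reach σ x (G.pathLen σ x - 1) with
    | none => rfl
    | some m => simp only [Option.elim, hlast m hc]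
  rw [InCell, InCell, key, key, hterm, hlen, hrate]

lemma not_inCell_of_reach_eq_some {d ℓ : ℕ} {ρ : ℝ≥0∞} (hd : G.reach τ x d = some y)
    (hpos : 0 < d) (hy : G.Terminates τ y) (hle : toLex (ρ, ℓ) ≤ G.key rate wait τ y) :
    ¬ G.InCell rate wait τ ℓ ρ x := fun hx =>
  (hle.trans_lt (key_lt_key_of_reach_eq_some hd hpos hy)).ne hx.2.symm

lemma inCell_update_iff_of_ne (j : ℕ) {ℓ : ℕ} {ρ : ℝ≥0∞} (hx : x ≠ k)
    (hk : G.Terminates σ k) (hk' : G.Terminates (Function.update σ k j) k)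
    (hle : toLex (ρ, ℓ) ≤ min (G.key rate wait σ k) (G.key rate wait (Function.update σ k j) k)) :
    G.InCell rate wait (Function.update σ k j) ℓ ρ x ↔ G.InCell rate wait σ ℓ ρ x := by
  by_cases hvisit : ∃ t, G.reach σ x t = some k
  · have hd := Nat.find_spec hvisit
    have hpos : 0 < Nat.find hvisit := Nat.pos_of_ne_zero fun h0 => by
      rw [h0, reach_zero] at hd
      exact hx (Option.some_injective _ hd)
    have hd' : G.reach (Function.update σ k j) x (Nat.find hvisit) = some k :=
      (reach_update_of_forall_lt_ne j fun s hs => Nat.find_min hvisit hs).trans hd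
    exact iff_of_false (not_inCell_of_reach_eq_some hd' hpos hk' (hle.trans (min_le_right _ _)))
      (not_inCell_of_reach_eq_some hd hpos hk (hle.trans (min_le_left _ _)))
  · exact inCell_update_iff_of_forall_reach_ne j (not_exists.mp hvisit)

variable (G) in
def ownerSign (x : Fin G.n) : ℤ :=
  if G.owner x = 0 then -1 else 1

lemma inCell_iff {ℓ : ℕ} {ρ : ℝ≥0∞} : G.InCell rate wait τ ℓ ρ x ↔
    G.Terminates τ x ∧ G.pathLen τ x = ℓ ∧ G.waitRate rate wait τ x = ρ := by
  rw [InCell, key, toLex_inj, Prod.mk.injEq, and_comm (a := _ = ρ)]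

lemma countPot_eq_sum (τ : Fin G.n → ℕ) (i : Fin 2) (ℓ : ℕ) (ρ : ℝ≥0∞) :
    (G.countPot rate wait τ i ℓ ρ : ℤ) =
      ∑ x, if G.owner x = i ∧ G.InCell rate wait τ ℓ ρ x then 1 else 0 := by
  simp only [countPot, inCell_iff, Nat.card_eq_fintype_card, Fintype.card_subtype,
    Finset.sum_boole]

lemma potential_eq_sum (τ : Fin G.n → ℕ) (ℓ : ℕ) (ρ : ℝ≥0∞) :
    G.potential rate wait τ ℓ ρ =
      ∑ x, if G.InCell rate wait τ ℓ ρ x then G.ownerSign x else 0 := by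
  rw [potential, countPot_eq_sum, countPot_eq_sum, ← Finset.sum_sub_distrib]
  refine Finset.sum_congr rfl fun x _ => ?_
  by_cases h : G.owner x = 0 <;> by_cases hx : G.InCell rate wait τ ℓ ρ x <;>
    simp [ownerSign, h, hx, Fin.eq_one_of_ne_zero]

lemma potential_sub_potential_of_forall_ne {τ' : Fin G.n → ℕ} {ℓ : ℕ} {ρ : ℝ≥0∞} (a : Fin G.n)
    (h : ∀ x ≠ a, G.InCell rate wait τ' ℓ ρ x ↔ G.InCell rate wait τ ℓ ρ x) :
    G.potential rate wait τ' ℓ ρ - G.potential rate wait τ ℓ ρ =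
      (if G.InCell rate wait τ' ℓ ρ a then G.ownerSign a else 0) -
        (if G.InCell rate wait τ ℓ ρ a then G.ownerSign a else 0) := by
  rw [potential_eq_sum, potential_eq_sum, ← Finset.sum_sub_distrib, Fintype.sum_eq_single a]
  intro x hx
  simp only [h x hx, sub_self]

lemma potential_update_sub_potential (j : ℕ) {ℓ : ℕ} {ρ : ℝ≥0∞}
    (hk : G.Terminates σ k) (hk' : G.Terminates (Function.update σ k j) k)
    (hle : toLex (ρ, ℓ) ≤ min (G.key rate wait σ k) (G.key rate wait (Function.update σ k j) k)) :
    G.potential rate wait (Function.update σ k j) ℓ ρ - G.potential rate wait σ ℓ ρ =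
      (if G.InCell rate wait (Function.update σ k j) ℓ ρ k then G.ownerSign k else 0) -
        (if G.InCell rate wait σ ℓ ρ k then G.ownerSign k else 0) :=
  potential_sub_potential_of_forall_ne k fun _ hx => inCell_update_iff_of_ne j hx hk hk' hle

end Cells

end PricedGame

lemma precPot_of_lex {P Q : ℕ → ℝ≥0∞ → ℤ} (ℓ₀ : ℕ) (ρ₀ : ℝ≥0∞)
    (hbelow : ∀ ℓ ρ, toLex (ρ, ℓ) < toLex (ρ₀, ℓ₀) → P ℓ ρ = Q ℓ ρ) (hpivot : P ℓ₀ ρ₀ < Q ℓ₀ ρ₀) :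
    PrecPot P Q :=
  ⟨ℓ₀, ρ₀, fun ρ hρ ℓ => hbelow ℓ ρ (Prod.Lex.toLex_lt_toLex.mpr (Or.inl hρ)),
    fun ℓ hℓ => hbelow ℓ ρ₀ (Prod.Lex.toLex_lt_toLex.mpr (Or.inr ⟨rfl, hℓ⟩)), hpivot⟩

open PricedGame

theorem improving_switch_decreases_potential_general (G : PricedGame)
    (rate : Fin G.n → ℝ≥0∞) (wait : Fin G.n → ℕ)
    (σ : Fin G.n → ℕ)
    (k : Fin G.n) (j : ℕ)
    (hterm : G.Terminates σ k ∧ G.Terminates (Function.update σ k j) k)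
    (himp1 : G.owner k = 0 →
      G.waitRate rate wait (Function.update σ k j) k < G.waitRate rate wait σ k ∨
      (G.waitRate rate wait (Function.update σ k j) k = G.waitRate rate wait σ k ∧
        G.pathLen (Function.update σ k j) k < G.pathLen σ k))
    (himp2 : G.owner k = 1 →
      G.waitRate rate wait σ k < G.waitRate rate wait (Function.update σ k j) k ∨
      (G.waitRate rate wait (Function.update σ k j) k = G.waitRate rate wait σ k ∧
        G.pathLen σ k < G.pathLen (Function.update σ k j) k)) :
    PrecPot (G.potential rate wait (Function.update σ k j)) (G.potential rate wait σ) := by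
  obtain ⟨hk, hk'⟩ := hterm
  set σ' := Function.update σ k j
  obtain ⟨⟨ρ₀, ℓ₀⟩, hpivot⟩ : ∃ p : ℝ≥0∞ × ℕ,
      toLex p = min (G.key rate wait σ k) (G.key rate wait σ' k) := ⟨ofLex _, rfl⟩
  refine precPot_of_lex ℓ₀ ρ₀ (fun ℓ ρ hlt => sub_eq_zero.mp ?_) (sub_neg.mp ?_)
  · have hσk : toLex (ρ, ℓ) < G.key rate wait σ k := hlt.trans_le (hpivot ▸ min_le_left _ _)
    have hσ'k : toLex (ρ, ℓ) < G.key rate wait σ' k := hlt.trans_le (hpivot ▸ min_le_right _ _)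
    rw [potential_update_sub_potential j hk hk' (hpivot ▸ hlt.le),
      if_neg fun h => hσ'k.ne' h.2, if_neg fun h => hσk.ne' h.2, sub_self]
  rw [potential_update_sub_potential j hk hk' hpivot.le]
  by_cases h0 : G.owner k = 0
  · have hlt : G.key rate wait σ' k < G.key rate wait σ k := Prod.Lex.toLex_lt_toLex.mpr (himp1 h0)
    rw [min_eq_right hlt.le] at hpivot
    rw [if_pos ⟨hk', hpivot.symm⟩, if_neg (fun h => hlt.ne (hpivot.symm.trans h.2.symm))]
    simp [ownerSign, h0]
  · have h1 := Fin.eq_one_of_ne_zero _ h0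
    have hlt : G.key rate wait σ k < G.key rate wait σ' k := Prod.Lex.toLex_lt_toLex.mpr
      ((himp2 h1).imp_right fun h => ⟨h.1.symm, h.2⟩)
    rw [min_eq_left hlt.le] at hpivot
    rw [if_neg (fun h => hlt.ne (hpivot.symm.trans h.2.symm)), if_pos ⟨hk, hpivot.symm⟩]
    simp [ownerSign, h1]

/-- in a priced game derived from an SPTG (each state `k` has a rate and a
designated waiting action `wait k` leading to `⊥`), if `σ` is an optimal strategy profile
and `j ∈ A k` is an improving switch for the owner of `k` in the associated infinitesimal
game — i.e. it leaves all payoffs unchanged but improves the (waiting rate, length)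
valuation at `k` for the owner of `k` — then the potential matrix strictly decreases:
`P(σ[j]) ≺ P(σ)`. -/
theorem improving_switch_decreases_potential (G : PricedGame)
    (rate : Fin G.n → ℝ≥0∞) (wait : Fin G.n → ℕ)
    (hwait : ∀ k, wait k ∈ G.A k ∧ G.dest (wait k) = none)
    (σ : Fin G.n → ℕ) (hσ : G.Valid σ)
    (k : Fin G.n) (j : ℕ) (hj : j ∈ G.A k) (hne : j ≠ σ k)
    (hterm : G.Terminates σ k ∧ G.Terminates (Function.update σ k j) k)
    (hpay : ∀ k', G.payoff (Function.update σ k j) k' = G.payoff σ k')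
    (himp1 : G.owner k = 0 →
      G.waitRate rate wait (Function.update σ k j) k < G.waitRate rate wait σ k ∨
      (G.waitRate rate wait (Function.update σ k j) k = G.waitRate rate wait σ k ∧
        G.pathLen (Function.update σ k j) k < G.pathLen σ k))
    (himp2 : G.owner k = 1 →
      G.waitRate rate wait σ k < G.waitRate rate wait (Function.update σ k j) k ∨
      (G.waitRate rate wait (Function.update σ k j) k = G.waitRate rate wait σ k ∧
        G.pathLen σ k < G.pathLen (Function.update σ k j) k)) :
    PrecPot (G.potential rate wait (Function.update σ k j)) (G.potential rate wait σ) :=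
  improving_switch_decreases_potential_general G rate wait σ k j hterm himp1 himp2

end PTGpaper
end
end
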